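/- (Liouville theorem for super-conformal maps) Let ψ : ℂ → ℍ be nowhere-vanishing with |ψ|⁻¹ bounded, satisfying ∗dψ = N·dψ and Nψ = ψi for N : ℂ → S². If f = ψ·(λ₀ + λ₁j) with λ₀, λ₁ entire holomorphic functions and |f| is bounded on ℂ, then λ₀ and λ₁ are constant; hence f = ψ·C for a constant quaternion C. -/

import Mathlib

/-- The embedding `ℂ ⊂ ℍ`, `a₀ + a₁ i ↦ ⟨a₀, a₁, 0, 0⟩`. -/
def toQ (z : ℂ) : Quaternion ℝ := ⟨z.re, z.im, 0, 0⟩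

/-- The quaternion `i`. -/
def qi : Quaternion ℝ := ⟨0, 1, 0, 0⟩

/-- The quaternion `j`. -/
def qj : Quaternion ℝ := ⟨0, 0, 1, 0⟩

/-- The components of `toQ a + toQ b * qj`. -/
lemma toQ_add_toQ_mul_qj (a b : ℂ) :
    toQ a + toQ b * qj = ⟨a.re, a.im, b.re, b.im⟩ := by
  ext <;> simp <;> simp [toQ, qj]

/-- `|a| ≤ ‖a + b j‖` in the quaternions. -/
lemma abs_fst_le (a b : ℂ) : ‖a‖ ≤ ‖toQ a + toQ b * qj‖ := by
  rw [@norm_eq_sqrt_real_inner (Quaternion ℝ) _ _ _,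
    Quaternion.inner_self, Quaternion.normSq_def', toQ_add_toQ_mul_qj, Complex.norm_def, Complex.normSq_apply]
  apply Real.sqrt_le_sqrt
  simp [Quaternion.normSq_def']
  nlinarith [sq_nonneg b.re, sq_nonneg b.im]

/-- `|b| ≤ ‖a + b j‖` in the quaternions. -/
lemma abs_snd_le (a b : ℂ) : ‖b‖ ≤ ‖toQ a + toQ b * qj‖ := by
  rw [@norm_eq_sqrt_real_inner (Quaternion ℝ) _ _ _,
    Quaternion.inner_self, Quaternion.normSq_def', toQ_add_toQ_mul_qj, Complex.norm_def, Complex.normSq_apply]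
  apply Real.sqrt_le_sqrt
  simp [Quaternion.normSq_def']
  nlinarith [sq_nonneg a.re, sq_nonneg a.im]

/-- Liouville's theorem for super-conformal maps: if `ψ : ℂ → ℍ` is nowhere vanishing with
`|ψ|⁻¹` bounded, `∗dψ = N·dψ`, `N·ψ = ψ·i`, and `f = ψ(λ₀ + λ₁j)` with `λ₀, λ₁` entire and
`|f|` bounded, then `λ₀, λ₁` are constant; hence `f = ψ·C` for a constant quaternion `C`. -/
theorem liouville_superconformal (ψ Nf : ℂ → Quaternion ℝ)
    (hψs : ContDiff ℝ (⊤ : ℕ∞) ψ)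
    (hψ0 : ∀ z, ψ z ≠ 0)
    (hψb : ∃ c : ℝ, ∀ z, ‖ψ z‖⁻¹ ≤ c)
    (hNval : ∀ z, (Nf z).re = 0 ∧ (Nf z) ^ 2 = -1)
    (hsc : ∀ z, ∀ v : ℂ, fderiv ℝ ψ z (Complex.I * v) = Nf z * fderiv ℝ ψ z v)
    (heig : ∀ z, Nf z * ψ z = ψ z * qi)
    (l₀ l₁ : ℂ → ℂ) (h₀ : Differentiable ℂ l₀) (h₁ : Differentiable ℂ l₁)
    (hfb : ∃ Cf : ℝ, ∀ z, ‖ψ z * (toQ (l₀ z) + toQ (l₁ z) * qj)‖ ≤ Cf) :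
    (∃ c₀ c₁ : ℂ, (∀ z, l₀ z = c₀) ∧ (∀ z, l₁ z = c₁)) ∧
    (∃ C : Quaternion ℝ, ∀ z, ψ z * (toQ (l₀ z) + toQ (l₁ z) * qj) = ψ z * C) := by
  obtain ⟨c, hc⟩ := hψb
  obtain ⟨Cf, hCf⟩ := hfb
  -- the combination `λ₀ + λ₁ j` is bounded
  have hq : ∀ z, ‖toQ (l₀ z) + toQ (l₁ z) * qj‖ ≤ c * Cf := by
    intro z
    have hpos : 0 < ‖ψ z‖ := norm_pos_iff.2 (hψ0 z)
    have h1 : ‖ψ z‖ * ‖toQ (l₀ z) + toQ (l₁ z) * qj‖ ≤ Cf := by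
      rw [← norm_mul]; exact hCf z
    have h2 : ‖toQ (l₀ z) + toQ (l₁ z) * qj‖ ≤ ‖ψ z‖⁻¹ * Cf := by
      rw [le_inv_mul_iff₀ hpos]; exact h1
    have hCf0 : 0 ≤ Cf := le_trans (norm_nonneg _) (hCf z)
    calc ‖toQ (l₀ z) + toQ (l₁ z) * qj‖ ≤ ‖ψ z‖⁻¹ * Cf := h2
      _ ≤ c * Cf := mul_le_mul_of_nonneg_right (hc z) hCf0
  have hb₀ : Bornology.IsBounded (Set.range l₀) := by
    rw [isBounded_iff_forall_norm_le]
    refine ⟨c * Cf, ?_⟩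
    rintro x ⟨z, rfl⟩
    exact le_trans (abs_fst_le (l₀ z) (l₁ z)) (hq z)
  have hb₁ : Bornology.IsBounded (Set.range l₁) := by
    rw [isBounded_iff_forall_norm_le]
    refine ⟨c * Cf, ?_⟩
    rintro x ⟨z, rfl⟩
    exact le_trans (abs_snd_le (l₀ z) (l₁ z)) (hq z)
  have k₀ : ∀ z, l₀ z = l₀ 0 := fun z => h₀.apply_eq_apply_of_bounded hb₀ z 0
  have k₁ : ∀ z, l₁ z = l₁ 0 := fun z => h₁.apply_eq_apply_of_bounded hb₁ z 0
  refine ⟨⟨l₀ 0, l₁ 0, k₀, k₁⟩, ⟨toQ (l₀ 0) + toQ (l₁ 0) * qj, fun z => by rw [k₀ z, k₁ z]⟩⟩
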